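/- For every n ≥ 1, the number of orbits of SL(2, ZMod 3) acting by left multiplication on 2×n matrices over ZMod 3 equals (3^(2n-1) + 3^(n+1) − 3^(n-1) + 5)/8. -/
import Mathlib


/-- The orbit of a `2 × n` matrix over `ZMod 3` under left multiplication by `SL(2, ZMod 3)`. -/
def slOrbit (n : ℕ) (M : Matrix (Fin 2) (Fin n) (ZMod 3)) :
    Set (Matrix (Fin 2) (Fin n) (ZMod 3)) :=
  { N | ∃ S : Matrix.SpecialLinearGroup (Fin 2) (ZMod 3),
      (S : Matrix (Fin 2) (Fin 2) (ZMod 3)) * M = N }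

abbrev SL3 := Matrix.SpecialLinearGroup (Fin 2) (ZMod 3)

instance slSMul (n : ℕ) : SMul SL3 (Matrix (Fin 2) (Fin n) (ZMod 3)) :=
  ⟨fun S M => (S : Matrix (Fin 2) (Fin 2) (ZMod 3)) * M⟩

theorem slSMul_def {n : ℕ} (S : SL3) (M : Matrix (Fin 2) (Fin n) (ZMod 3)) :
    S • M = (S : Matrix (Fin 2) (Fin 2) (ZMod 3)) * M := rfl

instance slAct (n : ℕ) : MulAction SL3 (Matrix (Fin 2) (Fin n) (ZMod 3)) where
  one_smul M := by simp [slSMul_def]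
  mul_smul S T M := by simp [slSMul_def, Matrix.mul_assoc]

theorem slOrbit_eq_orbit (n : ℕ) (M : Matrix (Fin 2) (Fin n) (ZMod 3)) :
    slOrbit n M = MulAction.orbit SL3 M := by
  ext N
  simp [slOrbit, MulAction.orbit, slSMul_def, eq_comm]

/-- number of fixed vectors of `S` -/
def kk (S : SL3) : ℕ :=
  Fintype.card {v : Fin 2 → ZMod 3 // (S : Matrix (Fin 2) (Fin 2) (ZMod 3)).mulVec v = v}

/-- the fixed points of `S` on matrices are tuples of fixed vectors -/
def fixEquiv (n : ℕ) (S : SL3) :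
    (MulAction.fixedBy (Matrix (Fin 2) (Fin n) (ZMod 3)) S) ≃
      (Fin n → {v : Fin 2 → ZMod 3 // (S : Matrix (Fin 2) (Fin 2) (ZMod 3)).mulVec v = v}) where
  toFun := fun ⟨M, hM⟩ => fun j => ⟨fun i => M i j, by
    have hM' : (S : Matrix (Fin 2) (Fin 2) (ZMod 3)) * M = M := hM
    funext i
    have := congrArg (fun A => A i j) hM'
    simpa [Matrix.mulVec, Matrix.mul_apply, dotProduct] using this⟩
  invFun := fun f => ⟨Matrix.of (fun i j => (f j).1 i), by
    simp only [MulAction.mem_fixedBy, slSMul_def]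
    ext i j
    have := congrFun (f j).2 i
    simpa [Matrix.mulVec, Matrix.mul_apply, dotProduct] using this⟩
  left_inv := fun ⟨M, hM⟩ => rfl
  right_inv := fun f => rfl

theorem card_fixedBy (n : ℕ) (S : SL3) :
    Fintype.card (MulAction.fixedBy (Matrix (Fin 2) (Fin n) (ZMod 3)) S) = kk S ^ n := by
  rw [Fintype.card_congr (fixEquiv n S), Fintype.card_fun, Fintype.card_fin]
  unfold kk
  congr!

theorem kk_vals : ∀ S : SL3, kk S = 9 ∨ kk S = 3 ∨ kk S = 1 := by decide
theorem kk9 : (Finset.univ.filter (fun S : SL3 => kk S = 9)).card = 1 := by decide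
theorem kk3 : (Finset.univ.filter (fun S : SL3 => kk S = 3)).card = 8 := by decide
theorem kk1 : (Finset.univ.filter (fun S : SL3 => kk S = 1)).card = 15 := by decide
theorem card_SL3 : Fintype.card SL3 = 24 := by decide

theorem sum_kk (n : ℕ) : (∑ S : SL3, kk S ^ n) = 9 ^ n + 8 * 3 ^ n + 15 := by
  have hsplit : ∀ S : SL3, kk S ^ n =
      (if kk S = 9 then 9 ^ n else 0) + (if kk S = 3 then 3 ^ n else 0) +
        (if kk S = 1 then 1 else 0) := by
    intro S
    rcases kk_vals S with h | h | h <;> simp [h]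
  calc (∑ S : SL3, kk S ^ n)
      = (∑ S : SL3, ((if kk S = 9 then 9 ^ n else 0) + (if kk S = 3 then 3 ^ n else 0) +
          (if kk S = 1 then 1 else 0))) := Finset.sum_congr rfl (fun S _ => hsplit S)
    _ = 9 ^ n + 8 * 3 ^ n + 15 := by
        rw [Finset.sum_add_distrib, Finset.sum_add_distrib,
          ← Finset.sum_filter, ← Finset.sum_filter, ← Finset.sum_filter,
          Finset.sum_const, Finset.sum_const, Finset.sum_const, kk9, kk3, kk1]
        simp [mul_comm]

theorem key (n : ℕ) :
    Nat.card (MulAction.orbitRel.Quotient SL3 (Matrix (Fin 2) (Fin n) (ZMod 3))) * 24 =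
      9 ^ n + 8 * 3 ^ n + 15 := by
  classical
  haveI : Fintype (MulAction.orbitRel.Quotient SL3 (Matrix (Fin 2) (Fin n) (ZMod 3))) :=
    Fintype.ofFinite _
  haveI : ∀ S : SL3, Fintype (MulAction.fixedBy (Matrix (Fin 2) (Fin n) (ZMod 3)) S) :=
    fun S => Fintype.ofFinite _
  have burnside := MulAction.sum_card_fixedBy_eq_card_orbits_mul_card_group SL3
    (Matrix (Fin 2) (Fin n) (ZMod 3))
  rw [Nat.card_eq_fintype_card]
  rw [card_SL3] at burnside
  rw [← burnside]
  rw [← sum_kk n]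
  refine Finset.sum_congr rfl fun S _ => ?_
  convert card_fixedBy n S using 2 <;> exact Subsingleton.elim _ _

/-- orbit sets are in bijection with the orbit quotient -/
noncomputable def orbitSetEquiv (n : ℕ) :
    MulAction.orbitRel.Quotient SL3 (Matrix (Fin 2) (Fin n) (ZMod 3)) ≃
      { O : Set (Matrix (Fin 2) (Fin n) (ZMod 3)) // ∃ M, O = slOrbit n M } := by
  refine Equiv.ofBijective
    (Quotient.lift (fun M => (⟨slOrbit n M, M, rfl⟩ :
        { O : Set (Matrix (Fin 2) (Fin n) (ZMod 3)) // ∃ M, O = slOrbit n M }))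
      (fun M N h => ?_)) ⟨?_, ?_⟩
  · have h' : MulAction.orbit SL3 M = MulAction.orbit SL3 N :=
      MulAction.orbit_eq_iff.mpr h
    simp only [Subtype.mk.injEq, slOrbit_eq_orbit]
    exact h'
  · rintro ⟨M⟩ ⟨N⟩ h
    have h2 : slOrbit n M = slOrbit n N := congrArg Subtype.val h
    rw [slOrbit_eq_orbit, slOrbit_eq_orbit] at h2
    exact Quotient.sound (MulAction.orbit_eq_iff.mp h2)
  · rintro ⟨O, M, rfl⟩
    exact ⟨Quotient.mk _ M, rfl⟩

theorem card_orbits_three (n : ℕ) (hn : 1 ≤ n) :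
    Nat.card { O : Set (Matrix (Fin 2) (Fin n) (ZMod 3)) // ∃ M, O = slOrbit n M } =
      (3 ^ (2 * n - 1) + 3 ^ (n + 1) - 3 ^ (n - 1) + 5) / 8 := by
  obtain ⟨m, rfl⟩ : ∃ m, n = m + 1 := ⟨n - 1, by omega⟩
  have h := key (m + 1)
  rw [Nat.card_congr (orbitSetEquiv (m + 1)).symm] at *
  have e1 : 2 * (m + 1) - 1 = 2 * m + 1 := by omega
  have e2 : (m + 1) - 1 = m := by omega
  rw [e1, e2]
  have e3 : (9 : ℕ) ^ (m + 1) = 9 * (3 ^ m * 3 ^ m) := by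
    rw [pow_succ, show (9:ℕ) = 3 * 3 from rfl, mul_pow]; ring
  have e4 : (3 : ℕ) ^ (m + 1) = 3 * 3 ^ m := by rw [pow_succ]; ring
  have e5 : (3 : ℕ) ^ (2 * m + 1) = 3 * (3 ^ m * 3 ^ m) := by
    rw [two_mul, pow_add, pow_add, pow_one]; ring
  have e6 : (3 : ℕ) ^ (m + 1 + 1) = 9 * 3 ^ m := by
    rw [pow_add, pow_add]; ring
  rw [e3, e4] at h
  rw [e5, e6]
  set a : ℕ := 3 ^ m * 3 ^ m with ha
  set b : ℕ := 3 ^ m with hb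
  omega
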